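/- arXiv:1905.05304 — 2 statements merged into one kernel-verified Lean document; each statement's English description precedes it below -/
import Mathlib

section
/- Let 𝒢=(G,λ) be a temporal graph of lifetime T and let Δ ≤ T. Then (2Δ−1) · max_𝒮 Σ_{W∈𝒮} μ_Δ(𝒢|_W) ≥ Δ · μ_Δ(𝒢), where the maximum ranges over all Δ-templates 𝒮 with respect to lifetime T. In particular, there exists a Δ-template 𝒮 such that Σ_{W∈𝒮} μ_Δ(𝒢|_W) ≥ (Δ/(2Δ−1)) · μ_Δ(𝒢), and hence 𝒢 has a Δ-temporal matching of size at least (Δ/(2Δ−1)) · μ_Δ(𝒢) that is a union of Δ-temporal matchings of the windows of a single Δ-template. -/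
variable {V : Type*}

/-- The underlying (static) graph of a temporal graph given by its time-labeling. -/
def ugraph (lab : Sym2 V → Finset ℕ) : SimpleGraph V where
  Adj x y := x ≠ y ∧ (lab s(x, y)).Nonempty
  symm := by
    constructor
    intro x y h
    exact ⟨h.1.symm, by rw [Sym2.eq_swap]; exact h.2⟩
  loopless := by constructor; intro x h; exact h.1 rfl

/-- `(e, t)` is a time edge of the temporal graph given by `lab`. -/
def IsTimeEdge (lab : Sym2 V → Finset ℕ) (p : Sym2 V × ℕ) : Prop :=
  ¬ p.1.IsDiag ∧ p.2 ∈ lab p.1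

/-- Two time edges are Δ-independent: edges disjoint or labels at least Δ apart. -/
def DIndep (Δ : ℕ) (p q : Sym2 V × ℕ) : Prop :=
  (∀ v, v ∈ p.1 → v ∉ q.1) ∨ Δ ≤ ((p.2 : ℤ) - (q.2 : ℤ)).natAbs

/-- A Δ-temporal matching. -/
def IsTM (lab : Sym2 V → Finset ℕ) (Δ : ℕ) (M : Finset (Sym2 V × ℕ)) : Prop :=
  (∀ p ∈ M, IsTimeEdge lab p) ∧ ∀ p ∈ M, ∀ q ∈ M, p ≠ q → DIndep Δ p q

/-- μ_Δ: maximum cardinality of a Δ-temporal matching. -/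
noncomputable def tmu (lab : Sym2 V → Finset ℕ) (Δ : ℕ) : ℕ :=
  sSup {k | ∃ M : Finset (Sym2 V × ℕ), IsTM lab Δ M ∧ M.card = k}

/-- The temporal graph has lifetime `T`. -/
def HasLifetime (lab : Sym2 V → Finset ℕ) (T : ℕ) : Prop :=
  (∀ e, ∀ t ∈ lab e, 1 ≤ t ∧ t ≤ T) ∧ ∃ e : Sym2 V, ¬ e.IsDiag ∧ T ∈ lab e

/-- The snapshot at time `t`. -/
def tsnapshot (lab : Sym2 V → Finset ℕ) (t : ℕ) : SimpleGraph V where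
  Adj x y := x ≠ y ∧ t ∈ lab s(x, y)
  symm := by
    constructor
    intro x y h
    exact ⟨h.1.symm, by rw [Sym2.eq_swap]; exact h.2⟩
  loopless := by constructor; intro x h; exact h.1 rfl

/-- 𝒢|_S : keep only time edges with label in `S`. -/
def trestrict (lab : Sym2 V → Finset ℕ) (S : Finset ℕ) : Sym2 V → Finset ℕ :=
  fun e => lab e ∩ S

/-- A finite matching of a static graph. -/
def IsMatchingF (G : SimpleGraph V) (R : Finset (Sym2 V)) : Prop :=
  (∀ e ∈ R, e ∈ G.edgeSet) ∧ ∀ e ∈ R, ∀ e' ∈ R, e ≠ e' → ∀ v, v ∈ e → v ∉ e'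

/-- ν(G): maximum cardinality of a matching. -/
noncomputable def matchNum (G : SimpleGraph V) : ℕ :=
  sSup {k | ∃ R : Finset (Sym2 V), IsMatchingF G R ∧ R.card = k}

/-- An independent set of a static graph. -/
def IsIndepF (G : SimpleGraph V) (S : Finset V) : Prop :=
  ∀ u ∈ S, ∀ v ∈ S, ¬ G.Adj u v

/-- α(G): maximum cardinality of an independent set. -/
noncomputable def indepNum (G : SimpleGraph V) : ℕ :=
  sSup {k | ∃ S : Finset V, IsIndepF G S ∧ S.card = k}

/-- The Δ-temporal line graph: vertices are the time edges, two distinct time edges are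
adjacent iff the edges share a vertex and the labels are less than Δ apart. -/
def tline (lab : Sym2 V → Finset ℕ) (Δ : ℕ) :
    SimpleGraph {p : Sym2 V × ℕ // IsTimeEdge lab p} where
  Adj p q := p ≠ q ∧ (∃ v, v ∈ p.1.1 ∧ v ∈ q.1.1) ∧ ((p.1.2 : ℤ) - (q.1.2 : ℤ)).natAbs < Δ
  symm := by
    constructor
    rintro p q ⟨hne, ⟨v, hv1, hv2⟩, hlt⟩
    exact ⟨hne.symm, ⟨v, hv2, hv1⟩, by omega⟩
  loopless := by constructor; rintro p ⟨hne, -⟩; exact hne rfl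

/-- An interval `I = [I.1, I.2] ⊆ [T]` is a Δ-window (length exactly Δ) or a partial
Δ-window (length at most Δ-1, and starting at slot 1 or ending at slot T). -/
def IsWindow (Δ T : ℕ) (I : ℕ × ℕ) : Prop :=
  1 ≤ I.1 ∧ I.1 ≤ I.2 ∧ I.2 ≤ T ∧
  (I.2 + 1 = I.1 + Δ ∨ (I.2 + 1 < I.1 + Δ ∧ (I.1 = 1 ∨ I.2 = T)))

/-- A family of pairwise disjoint Δ-windows or partial Δ-windows in `[T]` such that
any two consecutive members are at distance exactly `Δ - 1` from each other
(the distance between `[a₁,b₁]` and `[a₂,b₂]` with `b₁ < a₂` being `a₂ - b₁ - 1`). -/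
def GoodFamily (Δ T : ℕ) (S : Finset (ℕ × ℕ)) : Prop :=
  (∀ I ∈ S, IsWindow Δ T I) ∧
  (∀ I ∈ S, ∀ J ∈ S, I ≠ J → (I.2 < J.1 ∨ J.2 < I.1)) ∧
  (∀ I ∈ S, ∀ J ∈ S, I.2 < J.1 → (∀ K ∈ S, ¬(I.2 < K.1 ∧ K.2 < J.1)) → J.1 = I.2 + Δ)

/-- A Δ-template with respect to lifetime `T`: a maximal such family. -/
def IsTemplate (Δ T : ℕ) (S : Finset (ℕ × ℕ)) : Prop :=
  GoodFamily Δ T S ∧ ∀ S' : Finset (ℕ × ℕ), S ⊆ S' → GoodFamily Δ T S' → S' = S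

/-!
For each offset `r < 2Δ - 1` there is a Δ-template whose windows end at the slots congruent to
`r` modulo `2Δ - 1`. A slot `t` lies `s` slots before the end of a window of the template with offset
`(t + s) mod (2Δ - 1)`, so every slot lies in windows of at least `Δ` of these `2Δ - 1` templates.
Restricting a maximum Δ-temporal matching to the windows of each template and summing over all
templates therefore counts each of its time edges at least `Δ` times, and the best template
captures a fraction `Δ / (2Δ - 1)` of `μ_Δ(𝒢)`. Windows of a template are at distance at least
`Δ - 1`, so maximum matchings of its windows combine into a single Δ-temporal matching.
-/

-- The intervals `I` and `J` are at distance at least `Δ - 1`.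
def FarApart (Δ : ℕ) (I J : ℕ × ℕ) : Prop :=
  I.2 + Δ ≤ J.1 ∨ J.2 + Δ ≤ I.1

section GoodFamily

variable {Δ T : ℕ} {S : Finset (ℕ × ℕ)}

lemma GoodFamily.add_le_fst_of_lt (hS : GoodFamily Δ T S) {I J : ℕ × ℕ} (hI : I ∈ S)
    (hJ : J ∈ S) (hIJ : I.2 < J.1) : I.2 + Δ ≤ J.1 := by
  -- The member `K` of `S` with the least start after `I` is consecutive to `I`.
  obtain ⟨K, hK, hKmin⟩ := (S.filter (fun K => I.2 < K.1)).exists_min_image Prod.fst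
    ⟨J, Finset.mem_filter.2 ⟨hJ, hIJ⟩⟩
  rw [Finset.mem_filter] at hK
  have hKJ := hKmin J (Finset.mem_filter.2 ⟨hJ, hIJ⟩)
  have hsucc := hS.2.2 I hI K hK.1 hK.2 fun L hL ⟨hIL, hLK⟩ => by
    have := hKmin L (Finset.mem_filter.2 ⟨hL, hIL⟩)
    have := (hS.1 L hL).2.1
    omega
  omega

lemma GoodFamily.pairwise_farApart (hS : GoodFamily Δ T S) :
    (S : Set (ℕ × ℕ)).Pairwise (FarApart Δ) := by
  intro I hI J hJ hIJ
  rcases hS.2.1 I hI J hJ hIJ with h | h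
  · exact Or.inl (hS.add_le_fst_of_lt hI hJ h)
  · exact Or.inr (hS.add_le_fst_of_lt hJ hI h)

lemma goodFamily_of_pairwise_farApart (hΔ : 1 ≤ Δ) (hwin : ∀ I ∈ S, IsWindow Δ T I)
    (hfar : (S : Set (ℕ × ℕ)).Pairwise (FarApart Δ))
    (hnext : ∀ I ∈ S, I.2 + Δ ≤ T → ∃ J ∈ S, J.1 = I.2 + Δ) :
    GoodFamily Δ T S := by
  refine ⟨hwin, fun I hI J hJ hIJ => ?_, fun I hI J hJ hIJ hbetween => ?_⟩
  · rcases hfar hI hJ hIJ with h | h <;> omega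
  · have hI12 := (hwin I hI).2.1
    obtain ⟨-, hJ12, hJT, -⟩ := hwin J hJ
    have hIJ' : I ≠ J := by rintro rfl; omega
    have hgap : I.2 + Δ ≤ J.1 := by rcases hfar hI hJ hIJ' with h | h <;> omega
    obtain ⟨K, hK, hK1⟩ := hnext I hI (by omega)
    by_contra hne
    have hKJ : K ≠ J := by rintro rfl; exact hne hK1
    have hK12 := (hwin K hK).2.1
    rcases hfar hK hJ hKJ with h | h
    · exact hbetween K hK ⟨by omega, by omega⟩
    · omega

lemma isTemplate_of_goodFamily (hΔ : 1 ≤ Δ) (hS : GoodFamily Δ T S)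
    (hfirst : ∃ W ∈ S, W.1 ≤ Δ) (hnext : ∀ I ∈ S, I.2 + Δ ≤ T → ∃ J ∈ S, J.1 = I.2 + Δ) :
    IsTemplate Δ T S := by
  refine ⟨hS, fun S' hSS' hS' => ?_⟩
  -- A new member `K` of `S'` is far from all of `S`. Then the successor in `S` of the last member
  -- ending before `K` also ends before `K`, and without such a member `W` leaves no room for `K`.
  by_contra hne
  obtain ⟨K, hKS', hKS⟩ := Finset.exists_of_ssubset (hSS'.ssubset_of_ne (Ne.symm hne))
  obtain ⟨hK1, hK12, hKT, -⟩ := hS'.1 K hKS'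
  have hfarK : ∀ I ∈ S, FarApart Δ I K := fun I hI =>
    hS'.pairwise_farApart (hSS' hI) hKS' fun h => hKS (h ▸ hI)
  by_cases hbefore : (S.filter (fun I => I.2 < K.1)).Nonempty
  · obtain ⟨I, hI, hImax⟩ := (S.filter (fun I => I.2 < K.1)).exists_max_image Prod.snd hbefore
    rw [Finset.mem_filter] at hI
    have hI12 := (hS.1 I hI.1).2.1
    have hIK : I.2 + Δ ≤ K.1 := by rcases hfarK I hI.1 with h | h <;> omega
    obtain ⟨J, hJ, hJ1⟩ := hnext I hI.1 (by omega)
    have hJ12 := (hS.1 J hJ).2.1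
    have hJK : J.2 < K.1 := by rcases hfarK J hJ with h | h <;> omega
    have := hImax J (Finset.mem_filter.2 ⟨hJ, hJK⟩)
    omega
  · obtain ⟨W, hW, hW1⟩ := hfirst
    rcases hfarK W hW with h | h
    · exact hbefore ⟨W, Finset.mem_filter.2 ⟨hW, by omega⟩⟩
    · omega

end GoodFamily

/-- Window `k` of the template with offset `r`: the slots `r + k (2Δ - 1) - (Δ - 1), …,
r + k (2Δ - 1)`, clipped to `[1, T]`; `template` keeps the nonempty ones. -/
def templateWindow (Δ T r k : ℕ) : ℕ × ℕ :=
  (max 1 (r + k * (2 * Δ - 1) + 1 - Δ), min (r + k * (2 * Δ - 1)) T)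

open Classical in
noncomputable def template (Δ T r : ℕ) : Finset (ℕ × ℕ) :=
  (Finset.Icc 1 T ×ˢ Finset.Icc 1 T).filter fun I => I.1 ≤ I.2 ∧ ∃ k, templateWindow Δ T r k = I

section Template

variable {Δ T r : ℕ} {I : ℕ × ℕ}

open Classical in
lemma mem_template : I ∈ template Δ T r ↔ I.1 ≤ I.2 ∧ ∃ k, templateWindow Δ T r k = I := by
  rw [template, Finset.mem_filter, and_iff_right_iff_imp]
  rintro ⟨hI, k, rfl⟩
  simp only [templateWindow, Finset.mem_product, Finset.mem_Icc] at hI ⊢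
  omega

lemma isWindow_of_mem_template (hI : I ∈ template Δ T r) : IsWindow Δ T I := by
  obtain ⟨hI, k, rfl⟩ := mem_template.1 hI
  simp only [IsWindow, templateWindow] at hI ⊢
  omega

lemma templateWindow_farApart_of_lt {k k' : ℕ} (hkk' : k < k') :
    (templateWindow Δ T r k).2 + Δ ≤ (templateWindow Δ T r k').1 := by
  have : (k + 1) * (2 * Δ - 1) ≤ k' * (2 * Δ - 1) := Nat.mul_le_mul_right _ hkk'
  simp only [templateWindow, add_one_mul] at this ⊢
  omega

lemma template_pairwise_farApart : (template Δ T r : Set (ℕ × ℕ)).Pairwise (FarApart Δ) := by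
  intro I hI J hJ hIJ
  obtain ⟨-, k, rfl⟩ := mem_template.1 hI
  obtain ⟨-, k', rfl⟩ := mem_template.1 hJ
  rcases lt_trichotomy k k' with h | rfl | h
  · exact Or.inl (templateWindow_farApart_of_lt h)
  · exact absurd rfl hIJ
  · exact Or.inr (templateWindow_farApart_of_lt h)

lemma exists_mem_template_fst_eq (hΔ : 1 ≤ Δ) (hI : I ∈ template Δ T r) (hIT : I.2 + Δ ≤ T) :
    ∃ J ∈ template Δ T r, J.1 = I.2 + Δ := by
  obtain ⟨hI, k, rfl⟩ := mem_template.1 hI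
  refine ⟨templateWindow Δ T r (k + 1), mem_template.2 ⟨?_, k + 1, rfl⟩, ?_⟩ <;>
  · simp only [templateWindow, add_one_mul] at hI hIT ⊢
    omega

lemma exists_mem_template_fst_le (hΔT : Δ ≤ T) (hr : r < 2 * Δ - 1) :
    ∃ W ∈ template Δ T r, W.1 ≤ Δ := by
  rcases Nat.eq_zero_or_pos r with rfl | hr0
  · refine ⟨templateWindow Δ T 0 1, mem_template.2 ⟨?_, 1, rfl⟩, ?_⟩ <;>
    · simp only [templateWindow]
      omega
  · refine ⟨templateWindow Δ T r 0, mem_template.2 ⟨?_, 0, rfl⟩, ?_⟩ <;>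
    · simp only [templateWindow]
      omega

lemma isTemplate_template (hΔ : 1 ≤ Δ) (hΔT : Δ ≤ T) (hr : r < 2 * Δ - 1) :
    IsTemplate Δ T (template Δ T r) :=
  have hnext := fun _ => exists_mem_template_fst_eq hΔ
  isTemplate_of_goodFamily hΔ
    (goodFamily_of_pairwise_farApart hΔ (fun _ => isWindow_of_mem_template)
      template_pairwise_farApart hnext)
    (exists_mem_template_fst_le hΔT hr) hnext

lemma exists_mem_template_mem_Icc {t s : ℕ} (ht : 1 ≤ t) (htT : t ≤ T) (hs : s < Δ) :
    ∃ I ∈ template Δ T ((t + s) % (2 * Δ - 1)), t ∈ Finset.Icc I.1 I.2 := by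
  have hdiv := Nat.mod_add_div' (t + s) (2 * Δ - 1)
  refine ⟨templateWindow Δ T _ ((t + s) / (2 * Δ - 1)), mem_template.2 ⟨?_, _, rfl⟩, ?_⟩
  · simp only [templateWindow]
    omega
  · simp only [templateWindow, Finset.mem_Icc]
    omega

lemma le_card_filter_template_mem_Icc {t : ℕ} (ht : 1 ≤ t) (htT : t ≤ T) :
    Δ ≤ ((Finset.range (2 * Δ - 1)).filter
      fun r => ∃ I ∈ template Δ T r, t ∈ Finset.Icc I.1 I.2).card := by
  calc Δ = (Finset.range Δ).card := (Finset.card_range Δ).symm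
    _ ≤ _ := by
      refine Finset.card_le_card_of_injOn (fun s => (t + s) % (2 * Δ - 1)) ?_ ?_
      · intro s hs
        simp only [Finset.coe_range, Set.mem_Iio] at hs
        exact Finset.mem_filter.2 ⟨Finset.mem_range.2 (Nat.mod_lt _ (by omega)),
          exists_mem_template_mem_Icc ht htT hs⟩
      · intro s hs s' hs' hss'
        simp only [Finset.coe_range, Set.mem_Iio] at hs hs'
        have := Nat.ModEq.add_left_cancel' t hss'
        rwa [Nat.ModEq, Nat.mod_eq_of_lt (by omega), Nat.mod_eq_of_lt (by omega)] at this

end Template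

section TemporalMatching

variable {lab : Sym2 V → Finset ℕ} {Δ : ℕ} {M : Finset (Sym2 V × ℕ)}

lemma IsTM.filter_snd_mem (hM : IsTM lab Δ M) (S : Finset ℕ) :
    IsTM (trestrict lab S) Δ (M.filter fun p => p.2 ∈ S) :=
  ⟨fun p hp => by
      obtain ⟨hpM, hpS⟩ := Finset.mem_filter.1 hp
      exact ⟨(hM.1 p hpM).1, Finset.mem_inter.2 ⟨(hM.1 p hpM).2, hpS⟩⟩,
    fun p hp q hq => hM.2 p (Finset.mem_filter.1 hp).1 q (Finset.mem_filter.1 hq).1⟩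

lemma IsTM.of_trestrict {S : Finset ℕ} (hM : IsTM (trestrict lab S) Δ M) : IsTM lab Δ M :=
  ⟨fun p hp => ⟨(hM.1 p hp).1, (Finset.mem_inter.1 (hM.1 p hp).2).1⟩, hM.2⟩

lemma IsTM.snd_mem_of_trestrict {S : Finset ℕ} (hM : IsTM (trestrict lab S) Δ M) {p : Sym2 V × ℕ}
    (hp : p ∈ M) : p.2 ∈ S :=
  (Finset.mem_inter.1 (hM.1 p hp).2).2

variable [Fintype V]

lemma bddAbove_card_isTM (lab : Sym2 V → Finset ℕ) (Δ : ℕ) :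
    BddAbove {k | ∃ M : Finset (Sym2 V × ℕ), IsTM lab Δ M ∧ M.card = k} := by
  refine ⟨((Finset.univ : Finset (Sym2 V)) ×ˢ Finset.univ.biUnion lab).card, ?_⟩
  rintro _ ⟨M, hM, rfl⟩
  refine Finset.card_le_card fun p hp => Finset.mem_product.2 ⟨Finset.mem_univ _, ?_⟩
  exact Finset.mem_biUnion.2 ⟨p.1, Finset.mem_univ _, (hM.1 p hp).2⟩

lemma IsTM.card_le_tmu (hM : IsTM lab Δ M) : M.card ≤ tmu lab Δ :=
  le_csSup (bddAbove_card_isTM lab Δ) ⟨M, hM, rfl⟩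

lemma exists_isTM_card_eq_tmu (lab : Sym2 V → Finset ℕ) (Δ : ℕ) :
    ∃ M : Finset (Sym2 V × ℕ), IsTM lab Δ M ∧ M.card = tmu lab Δ := by
  refine Nat.sSup_mem ?_ (bddAbove_card_isTM lab Δ)
  exact ⟨0, ∅, ⟨by simp, by simp⟩, Finset.card_empty⟩

lemma IsTM.card_filter_le_sum_tmu [DecidableEq V] {ι : Type*} (hM : IsTM lab Δ M) (S : Finset ι)
    (f : ι → Finset ℕ) [DecidablePred fun p : Sym2 V × ℕ => ∃ i ∈ S, p.2 ∈ f i] :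
    (M.filter fun p => ∃ i ∈ S, p.2 ∈ f i).card ≤ ∑ i ∈ S, tmu (trestrict lab (f i)) Δ :=
  calc (M.filter fun p => ∃ i ∈ S, p.2 ∈ f i).card
      ≤ (S.biUnion fun i => M.filter fun p => p.2 ∈ f i).card := by
        refine Finset.card_le_card fun p hp => ?_
        obtain ⟨hpM, i, hi, hpi⟩ := Finset.mem_filter.1 hp
        exact Finset.mem_biUnion.2 ⟨i, hi, Finset.mem_filter.2 ⟨hpM, hpi⟩⟩
    _ ≤ ∑ i ∈ S, (M.filter fun p => p.2 ∈ f i).card := Finset.card_biUnion_le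
    _ ≤ ∑ i ∈ S, tmu (trestrict lab (f i)) Δ :=
        Finset.sum_le_sum fun i _ => (hM.filter_snd_mem (f i)).card_le_tmu

end TemporalMatching

section WindowMatchings

variable {lab : Sym2 V → Finset ℕ} {Δ : ℕ} {S : Finset (ℕ × ℕ)}

lemma isTM_biUnion [DecidableEq V] (hS : (S : Set (ℕ × ℕ)).Pairwise (FarApart Δ))
    {MW : ℕ × ℕ → Finset (Sym2 V × ℕ)}
    (hMW : ∀ I ∈ S, IsTM (trestrict lab (Finset.Icc I.1 I.2)) Δ (MW I)) :
    IsTM lab Δ (S.biUnion MW) := by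
  refine ⟨fun p hp => ?_, fun p hp q hq hpq => ?_⟩
  · obtain ⟨I, hI, hpI⟩ := Finset.mem_biUnion.1 hp
    exact (hMW I hI).of_trestrict.1 p hpI
  obtain ⟨I, hI, hpI⟩ := Finset.mem_biUnion.1 hp
  obtain ⟨J, hJ, hqJ⟩ := Finset.mem_biUnion.1 hq
  obtain rfl | hIJ := eq_or_ne I J
  · exact (hMW I hI).2 p hpI q hqJ hpq
  have hp' := Finset.mem_Icc.1 ((hMW I hI).snd_mem_of_trestrict hpI)
  have hq' := Finset.mem_Icc.1 ((hMW J hJ).snd_mem_of_trestrict hqJ)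
  right
  rcases hS hI hJ hIJ with h | h <;> omega

lemma card_biUnion_of_pairwise_farApart [DecidableEq V] (hΔ : 1 ≤ Δ)
    (hS : (S : Set (ℕ × ℕ)).Pairwise (FarApart Δ)) {MW : ℕ × ℕ → Finset (Sym2 V × ℕ)}
    (hMW : ∀ I ∈ S, IsTM (trestrict lab (Finset.Icc I.1 I.2)) Δ (MW I)) :
    (S.biUnion MW).card = ∑ I ∈ S, (MW I).card := by
  refine Finset.card_biUnion fun I hI J hJ hIJ => Finset.disjoint_left.2 fun p hpI hpJ => ?_
  have hpI' := Finset.mem_Icc.1 ((hMW I hI).snd_mem_of_trestrict hpI)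
  have hpJ' := Finset.mem_Icc.1 ((hMW J hJ).snd_mem_of_trestrict hpJ)
  rcases hS hI hJ hIJ with h | h <;> omega

variable [Fintype V] [DecidableEq V]

lemma exists_isTM_biUnion_card_eq_sum_tmu (hΔ : 1 ≤ Δ)
    (hS : (S : Set (ℕ × ℕ)).Pairwise (FarApart Δ)) :
    ∃ MW : ℕ × ℕ → Finset (Sym2 V × ℕ),
      (∀ I ∈ S, IsTM (trestrict lab (Finset.Icc I.1 I.2)) Δ (MW I)) ∧
      IsTM lab Δ (S.biUnion MW) ∧
      (S.biUnion MW).card = ∑ I ∈ S, tmu (trestrict lab (Finset.Icc I.1 I.2)) Δ := by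
  choose MW hMW hcard using fun I : ℕ × ℕ =>
    exists_isTM_card_eq_tmu (trestrict lab (Finset.Icc I.1 I.2)) Δ
  refine ⟨MW, fun I _ => hMW I, isTM_biUnion hS fun I _ => hMW I, ?_⟩
  rw [card_biUnion_of_pairwise_farApart hΔ hS fun I _ => hMW I]
  exact Finset.sum_congr rfl fun I _ => hcard I

lemma sum_tmu_trestrict_le_tmu (hΔ : 1 ≤ Δ) (hS : (S : Set (ℕ × ℕ)).Pairwise (FarApart Δ)) :
    ∑ I ∈ S, tmu (trestrict lab (Finset.Icc I.1 I.2)) Δ ≤ tmu lab Δ := by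
  obtain ⟨MW, -, hunion, hcard⟩ := exists_isTM_biUnion_card_eq_sum_tmu (lab := lab) hΔ hS
  exact hcard ▸ hunion.card_le_tmu

end WindowMatchings

section Averaging

variable [Fintype V] [DecidableEq V] {lab : Sym2 V → Finset ℕ} {Δ T : ℕ}

lemma IsTM.mul_card_le_sum_template {M : Finset (Sym2 V × ℕ)} (hM : IsTM lab Δ M)
    (hlab : ∀ e, ∀ t ∈ lab e, 1 ≤ t ∧ t ≤ T) :
    Δ * M.card ≤ ∑ r ∈ Finset.range (2 * Δ - 1),
      ∑ I ∈ template Δ T r, tmu (trestrict lab (Finset.Icc I.1 I.2)) Δ := by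
  let covers (p : Sym2 V × ℕ) (r : ℕ) : Prop := ∃ I ∈ template Δ T r, p.2 ∈ Finset.Icc I.1 I.2
  calc Δ * M.card = M.card • Δ := by rw [smul_eq_mul, mul_comm]
    _ ≤ ∑ p ∈ M, ((Finset.range (2 * Δ - 1)).bipartiteAbove covers p).card :=
        Finset.card_nsmul_le_sum _ _ _ fun p hp =>
          le_card_filter_template_mem_Icc (hlab _ _ (hM.1 p hp).2).1 (hlab _ _ (hM.1 p hp).2).2
    _ = ∑ r ∈ Finset.range (2 * Δ - 1), (M.bipartiteBelow covers r).card :=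
        Finset.sum_card_bipartiteAbove_eq_sum_card_bipartiteBelow _
    _ ≤ _ := Finset.sum_le_sum fun r _ => hM.card_filter_le_sum_tmu _ _

lemma exists_isTemplate_mul_tmu_le (hT : HasLifetime lab T) (hΔ : 1 ≤ Δ) (hΔT : Δ ≤ T) :
    ∃ S : Finset (ℕ × ℕ), IsTemplate Δ T S ∧
      Δ * tmu lab Δ ≤ (2 * Δ - 1) * ∑ I ∈ S, tmu (trestrict lab (Finset.Icc I.1 I.2)) Δ := by
  obtain ⟨M, hM, hMcard⟩ := exists_isTM_card_eq_tmu lab Δ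
  obtain ⟨r, hr, hmax⟩ := (Finset.range (2 * Δ - 1)).exists_max_image
    (fun r => ∑ I ∈ template Δ T r, tmu (trestrict lab (Finset.Icc I.1 I.2)) Δ)
    ⟨0, Finset.mem_range.2 (by omega)⟩
  refine ⟨template Δ T r, isTemplate_template hΔ hΔT (Finset.mem_range.1 hr), ?_⟩
  calc Δ * tmu lab Δ = Δ * M.card := by rw [hMcard]
    _ ≤ _ := hM.mul_card_le_sum_template hT.1
    _ ≤ (Finset.range (2 * Δ - 1)).card • _ := Finset.sum_le_card_nsmul _ _ _ hmax
    _ = _ := by rw [Finset.card_range, smul_eq_mul]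

end Averaging

/-- `(2Δ-1) · max_𝒮 ∑_{W ∈ 𝒮} μ_Δ(𝒢|_W) ≥ Δ · μ_Δ(𝒢)` over all
Δ-templates 𝒮; in particular some Δ-template 𝒮 satisfies
`∑_{W ∈ 𝒮} μ_Δ(𝒢|_W) ≥ (Δ/(2Δ-1)) · μ_Δ(𝒢)`, and hence 𝒢 has a Δ-temporal
matching of size at least `(Δ/(2Δ-1)) · μ_Δ(𝒢)` that is a union of Δ-temporal
matchings of the windows of a single Δ-template. -/
theorem stmt13 {V : Type*} [Fintype V] [DecidableEq V]
    (lab : Sym2 V → Finset ℕ) (T Δ : ℕ) (hT : HasLifetime lab T)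
    (hΔ : 1 ≤ Δ) (hΔT : Δ ≤ T) :
    Δ * tmu lab Δ ≤ (2 * Δ - 1) *
      sSup {k | ∃ S : Finset (ℕ × ℕ), IsTemplate Δ T S ∧
        k = ∑ I ∈ S, tmu (trestrict lab (Finset.Icc I.1 I.2)) Δ} ∧
    (∃ S : Finset (ℕ × ℕ), IsTemplate Δ T S ∧
      Δ * tmu lab Δ ≤ (2 * Δ - 1) * ∑ I ∈ S, tmu (trestrict lab (Finset.Icc I.1 I.2)) Δ) ∧
    (∃ S : Finset (ℕ × ℕ), IsTemplate Δ T S ∧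
      ∃ MW : ℕ × ℕ → Finset (Sym2 V × ℕ),
        (∀ I ∈ S, IsTM (trestrict lab (Finset.Icc I.1 I.2)) Δ (MW I)) ∧
        IsTM lab Δ (S.biUnion MW) ∧
        Δ * tmu lab Δ ≤ (2 * Δ - 1) * (S.biUnion MW).card) := by
  obtain ⟨S, hS, hle⟩ := exists_isTemplate_mul_tmu_le hT hΔ hΔT
  obtain ⟨MW, hMW, hunion, hcard⟩ :=
    exists_isTM_biUnion_card_eq_sum_tmu (lab := lab) hΔ hS.1.pairwise_farApart
  have hbdd : BddAbove {k | ∃ S : Finset (ℕ × ℕ), IsTemplate Δ T S ∧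
      k = ∑ I ∈ S, tmu (trestrict lab (Finset.Icc I.1 I.2)) Δ} := by
    refine ⟨tmu lab Δ, ?_⟩
    rintro _ ⟨S', hS', rfl⟩
    exact sum_tmu_trestrict_le_tmu hΔ hS'.1.pairwise_farApart
  exact ⟨hle.trans (Nat.mul_le_mul_left _ (le_csSup hbdd ⟨S, hS, rfl⟩)), ⟨S, hS, hle⟩,
    S, hS, MW, hMW, hunion, hcard ▸ hle⟩
end

section
/- Let (G,λ) be a temporal graph, let Δ∈ℕ, and let M be a Δ-temporal matching of (G,λ). Let e be an edge of G with t_1 ∈ λ(e), t_2 ∈ λ(e), and t_1 < t_2 ≤ Δ. If (e,t_1) ∉ M and (e,t_2) ∈ M, then M' = (M ∖ {(e,t_2)}) ∪ {(e,t_1)} is a Δ-temporal matching of (G,λ). -/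
variable {V : Type*}

/-!
Replacing `(e, t₂)` by `(e, t₁)` only moves a time edge earlier. A time edge `q` conflicting
with `(e, t₁)` shares a vertex with `e`, so it was separated from `(e, t₂)` by at least `Δ`;
since labels are positive and `t₂ ≤ Δ`, `q` cannot lie `Δ` before `t₂`, hence it lies at least
`Δ` after `t₂`, and a fortiori at least `Δ` after `t₁`.
-/

theorem DIndep.symm {Δ : ℕ} {p q : Sym2 V × ℕ} (h : DIndep Δ p q) : DIndep Δ q p := by
  rcases h with hdisj | hfar
  · exact Or.inl fun v hvq hvp => hdisj v hvp hvq
  · exact Or.inr (by omega)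

theorem DIndep.of_le_label {Δ : ℕ} {e : Sym2 V} {t₁ t₂ : ℕ} {q : Sym2 V × ℕ}
    (h : DIndep Δ (e, t₂) q) (hq : 1 ≤ q.2) (ht : t₁ ≤ t₂) (ht₂ : t₂ ≤ Δ) :
    DIndep Δ (e, t₁) q := by
  rcases h with hdisj | hfar
  · exact Or.inl hdisj
  · exact Or.inr (by simp only at hfar ⊢; omega)

theorem IsTM.subset {lab : Sym2 V → Finset ℕ} {Δ : ℕ} {M N : Finset (Sym2 V × ℕ)}
    (hM : IsTM lab Δ M) (hNM : N ⊆ M) : IsTM lab Δ N :=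
  ⟨fun p hp => hM.1 p (hNM hp), fun p hp q hq => hM.2 p (hNM hp) q (hNM hq)⟩

theorem IsTM.insert [DecidableEq V] {lab : Sym2 V → Finset ℕ} {Δ : ℕ}
    {M : Finset (Sym2 V × ℕ)} {p : Sym2 V × ℕ} (hM : IsTM lab Δ M) (hp : IsTimeEdge lab p)
    (hpM : ∀ q ∈ M, q ≠ p → DIndep Δ p q) : IsTM lab Δ (insert p M) := by
  refine ⟨fun r hr => ?_, fun r hr s hs hrs => ?_⟩
  · rcases Finset.mem_insert.mp hr with rfl | hr
    exacts [hp, hM.1 r hr]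
  · rcases Finset.mem_insert.mp hr with rfl | hrM <;> rcases Finset.mem_insert.mp hs with rfl | hsM
    · exact absurd rfl hrs
    · exact hpM s hsM hrs.symm
    · exact (hpM r hrM hrs).symm
    · exact hM.2 r hrM s hsM hrs

theorem stmt14_general {V : Type*} [DecidableEq V]
    (lab : Sym2 V → Finset ℕ) (Δ : ℕ) (hpos : ∀ e, ∀ t ∈ lab e, 1 ≤ t)
    (M : Finset (Sym2 V × ℕ)) (hM : IsTM lab Δ M)
    (e : Sym2 V) (t1 t2 : ℕ) (h1 : t1 ∈ lab e)
    (hlt : t1 < t2) (ht2 : t2 ≤ Δ)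
    (hin : (e, t2) ∈ M) :
    IsTM lab Δ (insert (e, t1) (M.erase (e, t2))) := by
  refine (hM.subset (M.erase_subset _)).insert ⟨(hM.1 _ hin).1, h1⟩ fun q hq _ => ?_
  have hqM : q ∈ M := Finset.mem_of_mem_erase hq
  have hfar : DIndep Δ (e, t2) q := hM.2 _ hin q hqM (Finset.ne_of_mem_erase hq).symm
  exact hfar.of_le_label (hpos _ _ (hM.1 q hqM).2) hlt.le ht2

/-- If `M` is a Δ-temporal matching, `t₁ < t₂ ≤ Δ` are both labels of an
edge `e`, `(e,t₁) ∉ M` and `(e,t₂) ∈ M`, then `(M \ {(e,t₂)}) ∪ {(e,t₁)}` is again a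
Δ-temporal matching. -/
theorem stmt14 {V : Type*} [DecidableEq V]
    (lab : Sym2 V → Finset ℕ) (Δ : ℕ) (hpos : ∀ e, ∀ t ∈ lab e, 1 ≤ t)
    (M : Finset (Sym2 V × ℕ)) (hM : IsTM lab Δ M)
    (e : Sym2 V) (t1 t2 : ℕ) (h1 : t1 ∈ lab e) (h2 : t2 ∈ lab e)
    (hlt : t1 < t2) (ht2 : t2 ≤ Δ)
    (hnotin : (e, t1) ∉ M) (hin : (e, t2) ∈ M) :
    IsTM lab Δ (insert (e, t1) (M.erase (e, t2))) :=
  stmt14_general lab Δ hpos M hM e t1 t2 h1 hlt ht2 hin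
end
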